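/- Let n ≥ 3, C > 0, f(x) = x/2 - ((n-2)/(2n)) C^{2n/(n-2)} x^{n/(n-2)}, x_c = C^{-n}, and let 0 < β < δ < 1. If g : [0,T] → ℝ≥0 is continuous with g(0) ≤ x_c, and f(g(t)) ≤ δ f(x_c) for all t ∈ [0,T], then g(t) ≤ x_c for all t ∈ [0,T]. -/
import Mathlib


/-- energy trapping: if `g` is continuous and nonnegative on `[0,T]`, `g 0 ≤ x_c`,
and `f (g t) ≤ δ f x_c` on `[0,T]` with `0 < β < δ < 1`, then `g t ≤ x_c` on `[0,T]`. -/
theorem stmt4 (n : ℕ) (hn : 3 ≤ n) (C : ℝ) (hC : 0 < C)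
    (f : ℝ → ℝ)
    (hf : ∀ x : ℝ, f x = x / 2 -
      (((n : ℝ) - 2) / (2 * (n : ℝ))) * C ^ ((2 * (n : ℝ)) / ((n : ℝ) - 2)) *
        x ^ ((n : ℝ) / ((n : ℝ) - 2)))
    (xc : ℝ) (hxc : xc = C ^ (-(n : ℝ)))
    (β δ T : ℝ) (hβ : 0 < β) (hβδ : β < δ) (hδ : δ < 1) (hT : 0 ≤ T)
    (g : ℝ → ℝ) (hg : ContinuousOn g (Set.Icc 0 T))
    (hgnn : ∀ t ∈ Set.Icc (0 : ℝ) T, 0 ≤ g t)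
    (hg0 : g 0 ≤ xc)
    (hbound : ∀ t ∈ Set.Icc (0 : ℝ) T, f (g t) ≤ δ * f xc) :
    ∀ t ∈ Set.Icc (0 : ℝ) T, g t ≤ xc := by
  have hn2 : (2 : ℝ) < (n : ℝ) := by exact_mod_cast lt_of_lt_of_le (by norm_num) hn
  have hne : (n : ℝ) - 2 ≠ 0 := by linarith
  have hnne : (n : ℝ) ≠ 0 := by linarith
  have hxcpos : 0 < xc := hxc ▸ Real.rpow_pos_of_pos hC _
  have hfxc : f xc = xc / n := by
    rw [hf, hxc]
    have h1 : (C ^ (-(n : ℝ))) ^ ((n : ℝ) / ((n : ℝ) - 2))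
        = C ^ (-(n : ℝ) * ((n : ℝ) / ((n : ℝ) - 2))) :=
      (Real.rpow_mul hC.le _ _).symm
    rw [h1, mul_assoc, ← Real.rpow_add hC]
    have h2 : (2 * (n : ℝ)) / ((n : ℝ) - 2) + -(n : ℝ) * ((n : ℝ) / ((n : ℝ) - 2))
        = -(n : ℝ) := by field_simp; ring
    rw [h2]
    field_simp
    ring
  have hfxcpos : 0 < f xc := by rw [hfxc]; positivity
  by_contra hcon
  push_neg at hcon
  obtain ⟨t, ht, htgt⟩ := hcon
  have hsub : Set.Icc (0 : ℝ) t ⊆ Set.Icc 0 T := Set.Icc_subset_Icc le_rfl ht.2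
  have h0t : (0 : ℝ) ∈ Set.Icc (0 : ℝ) T := ⟨le_rfl, hT⟩
  obtain ⟨s, hs, hgs⟩ := intermediate_value_Icc ht.1 (hg.mono hsub) ⟨hg0, htgt.le⟩
  have hsT : s ∈ Set.Icc (0 : ℝ) T := hsub hs
  have := hbound s hsT
  rw [hgs] at this
  nlinarith
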